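/- arXiv:1508.01533 — 2 statements merged into one kernel-verified Lean document; each statement's English description precedes it below -/
import Mathlib

section
/- Let $(\varphi_n)_{n\ge 1}$ be a sequence of functions on $[1,\infty)$ satisfying $\varphi_n(1)=1$, $0 \le \varphi_n \le 1$, and $\varphi_n(x_1) \le (\varphi_n(x_2))^{(x_1-1)/(x_2-1)}$ for all $1 < x_1 < x_2$. Suppose $\psi$ is a right-continuous nonincreasing function on $(1,\infty)$ and $\varphi_{n_k}(x) \to \psi(x)$ at each continuity point $x$ of $\psi$ along some subsequence $n_k \to \infty$. Then $\psi$ is continuous on $(1,\infty)$. -/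
/-!
At continuity points of `ψ` the inequality `ψ y ≤ ψ x ^ ((y - 1) / (x - 1))` passes to the limit
from the `φ (n k)`. The discontinuity points of the antitone `ψ` are countable, so every point is
approached from the right by continuity points, and right-continuity extends the inequality to all
`1 < y < x`. Letting `y ↑ x`, the right-hand side tends to `ψ x`, while `ψ x ≤ ψ y` by
monotonicity; this squeeze gives left-continuity.
-/

open Filter Set Topology

theorem AntitoneOn.countable_not_continuousAt_of_isOpen {α β : Type*} [LinearOrder α]
    [TopologicalSpace α] [OrderTopology α] [LinearOrder β] [TopologicalSpace β]
    [OrderTopology β] [SecondCountableTopology β] {f : α → β} {s : Set α}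
    (hf : AntitoneOn f s) (hs : IsOpen s) :
    {x ∈ s | ¬ContinuousAt f x}.Countable :=
  hf.countable_not_continuousWithinAt.mono fun _ ⟨hxs, hx⟩ =>
    show _ ∧ _ from ⟨hxs, fun h => hx (h.continuousAt (hs.mem_nhds hxs))⟩

theorem left_mem_closure_Ioo_diff {D : Set ℝ} (hD : D.Countable) {a b : ℝ} (hab : a < b) :
    a ∈ closure (Ioo a b \ D) := by
  have h : Ioo a b ⊆ closure (Ioo a b \ D) :=
    (hD.dense_compl ℝ).open_subset_closure_inter isOpen_Ioo
  exact closure_minimal h isClosed_closure (by rw [closure_Ioo hab.ne]; exact ⟨le_rfl, hab.le⟩)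

theorem le_of_le_off_countable_of_continuousWithinAt_Ici {f g : ℝ → ℝ} {D : Set ℝ}
    (hD : D.Countable) {x b : ℝ} (hxb : x < b) (hf : ContinuousWithinAt f (Ici x) x)
    (hg : ContinuousWithinAt g (Ici x) x) (h : ∀ u ∈ Ioo x b \ D, f u ≤ g u) : f x ≤ g x := by
  have hsub : Ioo x b \ D ⊆ Ici x := fun _ hu => hu.1.1.le
  exact (hf.mono hsub).closure_le (left_mem_closure_Ioo_diff hD hxb) (hg.mono hsub) h

section

variable {ψ : ℝ → ℝ}

theorem le_rpow_of_le_rpow_at_continuousAt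
    (hD : {x ∈ Ioi (1 : ℝ) | ¬ContinuousAt ψ x}.Countable)
    (hrc : ∀ x ∈ Ioi (1 : ℝ), ContinuousWithinAt ψ (Ici x) x)
    (h : ∀ u v : ℝ, 1 < u → u < v → ContinuousAt ψ u → ContinuousAt ψ v →
      ψ u ≤ ψ v ^ ((u - 1) / (v - 1)))
    {y x : ℝ} (hy : 1 < y) (hyx : y < x) : ψ y ≤ ψ x ^ ((y - 1) / (x - 1)) := by
  have hcont : ∀ u, 1 < u → u ∉ {x ∈ Ioi (1 : ℝ) | ¬ContinuousAt ψ x} → ContinuousAt ψ u :=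
    fun u hu huD => not_not.1 fun hnc => huD ⟨hu, hnc⟩
  have hpos : ∀ v, y < v → 0 < (y - 1) / (v - 1) := fun v hv =>
    div_pos (by linarith) (by linarith)
  have hle_at_continuity_point :
      ∀ v, y < v → ContinuousAt ψ v → ψ y ≤ ψ v ^ ((y - 1) / (v - 1)) := by
    intro v hyv hv
    refine le_of_le_off_countable_of_continuousWithinAt_Ici hD hyv (hrc y hy) ?_
      fun u ⟨⟨hyu, huv⟩, huD⟩ => h u v (hy.trans hyu) huv (hcont u (hy.trans hyu) huD) hv
    exact continuousWithinAt_const.rpow ((continuousWithinAt_id.sub_const 1).div_const _)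
      (Or.inr (hpos v hyv))
  refine le_of_le_off_countable_of_continuousWithinAt_Ici hD (lt_add_one x)
    continuousWithinAt_const ?_ fun v ⟨⟨hxv, _⟩, hvD⟩ =>
      hle_at_continuity_point v (hyx.trans hxv) (hcont v (hy.trans (hyx.trans hxv)) hvD)
  exact (hrc x (hy.trans hyx)).rpow
    (continuousWithinAt_const.div (continuousWithinAt_id.sub_const 1)
      (sub_pos.2 (hy.trans hyx)).ne')
    (Or.inr (hpos x hyx))

theorem continuousOn_Ioi_of_le_rpow (hrc : ∀ x ∈ Ioi (1 : ℝ), ContinuousWithinAt ψ (Ici x) x)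
    (hanti : AntitoneOn ψ (Ioi 1))
    (h : ∀ y x : ℝ, 1 < y → y < x → ψ y ≤ ψ x ^ ((y - 1) / (x - 1))) :
    ContinuousOn ψ (Ioi 1) := by
  intro x hx
  have hx1 : (1 : ℝ) < x := hx
  refine ContinuousAt.continuousWithinAt (continuousAt_iff_continuous_left'_right'.2
    ⟨?_, continuousWithinAt_Ioi_iff_Ici.2 (hrc x hx)⟩)
  have hIoo : ∀ᶠ u in 𝓝[<] x, u ∈ Ioo 1 x := Ioo_mem_nhdsLT_of_mem ⟨hx1, le_rfl⟩
  have hlower : ∀ᶠ u in 𝓝[<] x, ψ x ≤ ψ u :=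
    hIoo.mono fun u hu => hanti hu.1 hx hu.2.le
  have hupper : ∀ᶠ u in 𝓝[<] x, ψ u ≤ ψ x ^ ((u - 1) / (x - 1)) :=
    hIoo.mono fun u hu => h u x hu.1 hu.2
  have hrpow : ContinuousAt (fun u => ψ x ^ ((u - 1) / (x - 1))) x :=
    continuousAt_const.rpow ((continuousAt_id.sub_const 1).div_const _)
      (Or.inr (by rw [div_self (sub_pos.2 hx1).ne']; exact one_pos))
  have hlim : Tendsto (fun u => ψ x ^ ((u - 1) / (x - 1))) (𝓝[<] x) (𝓝 (ψ x)) := by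
    have := hrpow.tendsto.mono_left (nhdsWithin_le_nhds (s := Iio x))
    rwa [div_self (sub_pos.2 hx1).ne', Real.rpow_one] at this
  exact tendsto_of_tendsto_of_tendsto_of_le_of_le' tendsto_const_nhds hlim hlower hupper

end

theorem stmt1_general (φ : ℕ → ℝ → ℝ) (ψ : ℝ → ℝ) (n : ℕ → ℕ)
    (hHolder : ∀ m, ∀ x₁ x₂ : ℝ, 1 < x₁ → x₁ < x₂ →
      φ m x₁ ≤ (φ m x₂) ^ ((x₁ - 1) / (x₂ - 1)))
    (hψrc : ∀ x ∈ Set.Ioi (1 : ℝ), ContinuousWithinAt ψ (Set.Ici x) x)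
    (hψmono : AntitoneOn ψ (Set.Ioi (1 : ℝ)))
    (hconv : ∀ x ∈ Set.Ioi (1 : ℝ), ContinuousAt ψ x →
      Tendsto (fun k => φ (n k) x) atTop (nhds (ψ x))) :
    ContinuousOn ψ (Set.Ioi (1 : ℝ)) := by
  have hlimit : ∀ u v : ℝ, 1 < u → u < v → ContinuousAt ψ u → ContinuousAt ψ v →
      ψ u ≤ ψ v ^ ((u - 1) / (v - 1)) := fun u v hu huv hcu hcv =>
    le_of_tendsto_of_tendsto' (hconv u hu hcu)
      ((hconv v (hu.trans huv) hcv).rpow_const (Or.inr (div_pos (by linarith) (by linarith)).le))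
      fun k => hHolder (n k) u v hu huv
  exact continuousOn_Ioi_of_le_rpow hψrc hψmono fun y x hy hyx =>
    le_rpow_of_le_rpow_at_continuousAt (hψmono.countable_not_continuousAt_of_isOpen isOpen_Ioi)
      hψrc hlimit hy hyx

theorem stmt1 (φ : ℕ → ℝ → ℝ) (ψ : ℝ → ℝ) (n : ℕ → ℕ)
    (hone : ∀ m, φ m 1 = 1)
    (hbdd : ∀ m, ∀ x ∈ Set.Ici (1 : ℝ), φ m x ∈ Set.Icc (0 : ℝ) 1)
    (hHolder : ∀ m, ∀ x₁ x₂ : ℝ, 1 < x₁ → x₁ < x₂ →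
      φ m x₁ ≤ (φ m x₂) ^ ((x₁ - 1) / (x₂ - 1)))
    (hψrc : ∀ x ∈ Set.Ioi (1 : ℝ), ContinuousWithinAt ψ (Set.Ici x) x)
    (hψmono : AntitoneOn ψ (Set.Ioi (1 : ℝ)))
    (hn : StrictMono n)
    (hconv : ∀ x ∈ Set.Ioi (1 : ℝ), ContinuousAt ψ x →
      Tendsto (fun k => φ (n k) x) atTop (nhds (ψ x))) :
    ContinuousOn ψ (Set.Ioi (1 : ℝ)) :=
  stmt1_general φ ψ n hHolder hψrc hψmono hconv
end

section
/- Let $Y_1,\dots,Y_n$ be i.i.d. positive random variables with distribution function $G$, let $\alpha > 1$, and let $\phi_\alpha(t) = \mathbb{E}(Y_1^\alpha e^{-t Y_1})$ and $\phi_0(t) = \mathbb{E}(e^{-t Y_1})$. Then $\mathbb{E}\left[\frac{\sum_{i=1}^n Y_i^{\alpha}}{(\sum_{i=1}^n Y_i)^{\alpha}}\right] = \frac{n}{\Gamma(\alpha)} \int_0^\infty t^{\alpha-1} \phi_\alpha(t) \phi_0(t)^{n-1} \, \mathrm{d}t$. -/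
/-!
With `S = ∑ i, Y i`, the Gamma integral gives `S ^ (-α) = Γ(α)⁻¹ ∫₀^∞ t ^ (α - 1) e^(-t S) dt`.
After Tonelli, the inner expectation `𝔼[Y i ^ α e^(-t S)]` factors by independence as
`𝔼[Y i ^ α e^(-t Y i)] ∏_{j ≠ i} 𝔼[e^(-t Y j)] = φα t * φ0 t ^ (n - 1)`, the same for each of
the `n` indices because the `Y i` are identically distributed.
-/

open MeasureTheory ProbabilityTheory Finset Real
open scoped ENNReal

lemma lintegral_Ioi_rpow_mul_exp_neg_mul {α s : ℝ} (hα : 0 < α) (hs : 0 < s) :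
    ∫⁻ t in Set.Ioi (0 : ℝ), ENNReal.ofReal (t ^ (α - 1) * exp (-t * s))
      = ENNReal.ofReal (Gamma α / s ^ α) := by
  have hint : IntegrableOn (fun t : ℝ => t ^ (α - 1) * exp (-t * s)) (Set.Ioi 0) := by
    simpa [neg_mul, mul_comm s] using
      integrableOn_rpow_mul_exp_neg_mul_rpow (s := α - 1) (by linarith) zero_lt_one hs
  rw [← ofReal_integral_eq_lintegral_ofReal hint]
  · simp_rw [neg_mul, mul_comm _ s]
    rw [integral_rpow_mul_exp_neg_mul_Ioi hα hs, one_div, inv_rpow hs.le, inv_mul_eq_div]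
  · filter_upwards [ae_restrict_mem measurableSet_Ioi] with t ht
    have : (0 : ℝ) < t := ht
    positivity

lemma ofReal_div_rpow_eq_lintegral {α c s : ℝ} (hα : 0 < α) (hc : 0 ≤ c) (hs : 0 < s) :
    ENNReal.ofReal (c / s ^ α) = ENNReal.ofReal (1 / Gamma α) *
      ∫⁻ t in Set.Ioi (0 : ℝ),
        ENNReal.ofReal (t ^ (α - 1)) * ENNReal.ofReal (c * exp (-t * s)) := by
  have hΓ : 0 < Gamma α := Gamma_pos_of_pos hα
  calc ENNReal.ofReal (c / s ^ α)
      = ENNReal.ofReal (1 / Gamma α) * (ENNReal.ofReal c * ENNReal.ofReal (Gamma α / s ^ α)) := by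
        rw [← ENNReal.ofReal_mul hc, ← ENNReal.ofReal_mul (by positivity)]
        congr 1
        field_simp
    _ = _ := by
        rw [← lintegral_Ioi_rpow_mul_exp_neg_mul hα hs,
          ← lintegral_const_mul' _ _ ENNReal.ofReal_ne_top]
        congr 1
        refine lintegral_congr fun t => ?_
        rw [← ENNReal.ofReal_mul hc, ← ENNReal.ofReal_mul' (by positivity)]
        congr 1
        ring

lemma lintegral_mul_prod_erase_of_iIndepFun_identDistrib {Ω ι : Type*} [MeasurableSpace Ω]
    {μ : Measure Ω} [Fintype ι] [DecidableEq ι] {Y : ι → Ω → ℝ} (hmeas : ∀ j, Measurable (Y j))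
    (hindep : iIndepFun Y μ) {i₀ : ι} (hident : ∀ j, IdentDistrib (Y j) (Y i₀) μ μ)
    {g h : ℝ → ℝ≥0∞} (hg : Measurable g) (hh : Measurable h) (i : ι) :
    ∫⁻ ω, g (Y i ω) * ∏ j ∈ univ.erase i, h (Y j ω) ∂μ
      = (∫⁻ ω, g (Y i₀ ω) ∂μ) * (∫⁻ ω, h (Y i₀ ω) ∂μ) ^ (Fintype.card ι - 1) := by
  set G : ι → ℝ → ℝ≥0∞ := Function.update (fun _ => h) i g
  have hGi : G i = g := Function.update_self ..
  have hGj : ∀ j ∈ univ.erase i, G j = h := fun j hj =>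
    Function.update_of_ne (ne_of_mem_erase hj) ..
  have hG : ∀ j, Measurable (G j) := by
    intro j
    rcases eq_or_ne j i with rfl | hj
    · rwa [hGi]
    · rwa [hGj j (mem_erase.2 ⟨hj, mem_univ j⟩)]
  have hsplit : ∀ F : ι → ℝ≥0∞, ∏ j, F j = F i * ∏ j ∈ univ.erase i, F j := fun F =>
    (mul_prod_erase univ F (mem_univ i)).symm
  have hlaw : ∀ j (f : ℝ → ℝ≥0∞), Measurable f → ∫⁻ ω, f (Y j ω) ∂μ = ∫⁻ ω, f (Y i₀ ω) ∂μ :=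
    fun j f hf => ((hident j).comp hf).lintegral_eq
  calc ∫⁻ ω, g (Y i ω) * ∏ j ∈ univ.erase i, h (Y j ω) ∂μ
      = ∫⁻ ω, ∏ j, G j (Y j ω) ∂μ := by
        refine lintegral_congr fun ω => ?_
        rw [hsplit, hGi]
        exact congrArg _ (prod_congr rfl fun j hj => by rw [hGj j hj])
    _ = ∏ j, ∫⁻ ω, G j (Y j ω) ∂μ :=
        lintegral_prod_eq_prod_lintegral_of_indepFun _ _ (hindep.comp G hG)
          fun j => (hG j).comp (hmeas j)
    _ = _ := by
        rw [hsplit, hGi, prod_congr rfl fun j hj => by rw [hGj j hj], hlaw i g hg,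
          prod_congr rfl fun j _ => hlaw j h hh, prod_const, card_erase_of_mem (mem_univ i),
          card_univ]

lemma ofReal_sum_rpow_mul_exp_neg_mul_sum {ι : Type*} [Fintype ι] [DecidableEq ι] {y : ι → ℝ}
    (hy : ∀ j, 0 ≤ y j) (α t : ℝ) :
    ENNReal.ofReal ((∑ i, y i ^ α) * exp (-t * ∑ i, y i))
      = ∑ i, ENNReal.ofReal (y i ^ α * exp (-t * y i)) *
          ∏ j ∈ univ.erase i, ENNReal.ofReal (exp (-t * y j)) := by
  have hexp : exp (-t * ∑ i, y i) = ∏ j, exp (-t * y j) := by rw [mul_sum, exp_sum]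
  have hterm : ∀ i, 0 ≤ y i ^ α := fun i => rpow_nonneg (hy i) α
  rw [hexp, sum_mul, ENNReal.ofReal_sum_of_nonneg fun i _ => by have := hterm i; positivity]
  refine sum_congr rfl fun i _ => ?_
  rw [← mul_prod_erase univ _ (mem_univ i), ← mul_assoc,
    ENNReal.ofReal_mul (by have := hterm i; positivity),
    ENNReal.ofReal_prod_of_nonneg fun j _ => by positivity]

lemma lintegral_ofReal_sum_rpow_mul_exp_neg_mul_sum {Ω ι : Type*} [MeasurableSpace Ω]
    {μ : Measure Ω} [Fintype ι] [DecidableEq ι] {Y : ι → Ω → ℝ} (hmeas : ∀ j, Measurable (Y j))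
    (hindep : iIndepFun Y μ) {i₀ : ι} (hident : ∀ j, IdentDistrib (Y j) (Y i₀) μ μ)
    (hnonneg : ∀ᵐ ω ∂μ, ∀ j, 0 ≤ Y j ω) (α t : ℝ) :
    ∫⁻ ω, ENNReal.ofReal ((∑ i, Y i ω ^ α) * exp (-t * ∑ i, Y i ω)) ∂μ
      = Fintype.card ι * (∫⁻ ω, ENNReal.ofReal (Y i₀ ω ^ α * exp (-t * Y i₀ ω)) ∂μ) *
          (∫⁻ ω, ENNReal.ofReal (exp (-t * Y i₀ ω)) ∂μ) ^ (Fintype.card ι - 1) := by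
  have hmeas_term : ∀ i, Measurable fun ω => ENNReal.ofReal (Y i ω ^ α * exp (-t * Y i ω)) *
      ∏ j ∈ univ.erase i, ENNReal.ofReal (exp (-t * Y j ω)) := by
    intro i
    have := hmeas
    fun_prop
  rw [lintegral_congr_ae (hnonneg.mono fun ω hω => ofReal_sum_rpow_mul_exp_neg_mul_sum hω α t),
    lintegral_finsetSum _ fun i _ => hmeas_term i]
  simp_rw [lintegral_mul_prod_erase_of_iIndepFun_identDistrib hmeas hindep hident
    (by fun_prop : Measurable fun u : ℝ => ENNReal.ofReal (u ^ α * exp (-t * u)))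
    (by fun_prop : Measurable fun u : ℝ => ENNReal.ofReal (exp (-t * u)))]
  rw [sum_const, card_univ, nsmul_eq_mul, mul_assoc]

theorem stmt4_general {Ω : Type*} [MeasureSpace Ω] (μ : Measure Ω) [IsProbabilityMeasure μ]
    (n : ℕ)
    (Y : Fin n → Ω → ℝ)
    (hmeas : ∀ i, Measurable (Y i))
    (hindep : iIndepFun Y μ)
    (hident : ∀ i j, IdentDistrib (Y i) (Y j) μ μ)
    (hpos : ∀ i, ∀ᵐ ω ∂μ, 0 < Y i ω)
    (α : ℝ) (hα : 1 < α) (i₀ : Fin n)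
    (φα φ0 : ℝ → ℝ≥0∞)
    (hφα : ∀ t : ℝ, φα t = ∫⁻ ω, ENNReal.ofReal (Y i₀ ω ^ α * Real.exp (-t * Y i₀ ω)) ∂μ)
    (hφ0 : ∀ t : ℝ, φ0 t = ∫⁻ ω, ENNReal.ofReal (Real.exp (-t * Y i₀ ω)) ∂μ) :
    ∫⁻ ω, ENNReal.ofReal ((∑ i, Y i ω ^ α) / (∑ i, Y i ω) ^ α) ∂μ =
      ENNReal.ofReal (n / Real.Gamma α) *
        ∫⁻ t in Set.Ioi (0 : ℝ),
          ENNReal.ofReal (t ^ (α - 1)) * φα t * (φ0 t) ^ (n - 1) := by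
  have hα0 : 0 < α := by linarith
  have hpos_all : ∀ᵐ ω ∂μ, ∀ j, 0 < Y j ω := ae_all_iff.2 hpos
  have hF : Measurable fun p : Ω × ℝ => ENNReal.ofReal (p.2 ^ (α - 1)) *
      ENNReal.ofReal ((∑ i, Y i p.1 ^ α) * exp (-p.2 * ∑ i, Y i p.1)) := by
    have := hmeas
    fun_prop
  calc ∫⁻ ω, ENNReal.ofReal ((∑ i, Y i ω ^ α) / (∑ i, Y i ω) ^ α) ∂μ
      = ∫⁻ ω, ENNReal.ofReal (1 / Gamma α) * (∫⁻ t in Set.Ioi (0 : ℝ),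
          ENNReal.ofReal (t ^ (α - 1)) *
            ENNReal.ofReal ((∑ i, Y i ω ^ α) * exp (-t * ∑ i, Y i ω))) ∂μ := by
        refine lintegral_congr_ae (hpos_all.mono fun ω hω => ?_)
        exact ofReal_div_rpow_eq_lintegral hα0 (sum_nonneg fun i _ => by have := hω i; positivity)
          (sum_pos (fun i _ => hω i) ⟨i₀, mem_univ i₀⟩)
    _ = ENNReal.ofReal (1 / Gamma α) * ∫⁻ t in Set.Ioi (0 : ℝ), ENNReal.ofReal (t ^ (α - 1)) *
          ∫⁻ ω, ENNReal.ofReal ((∑ i, Y i ω ^ α) * exp (-t * ∑ i, Y i ω)) ∂μ := by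
        rw [lintegral_const_mul' _ _ ENNReal.ofReal_ne_top,
          lintegral_lintegral_swap hF.aemeasurable]
        simp_rw [lintegral_const_mul' _ _ ENNReal.ofReal_ne_top]
    _ = _ := by
        simp_rw [lintegral_ofReal_sum_rpow_mul_exp_neg_mul_sum hmeas hindep (fun j => hident j i₀)
          (hpos_all.mono fun ω hω j => (hω j).le), ← hφα, ← hφ0, Fintype.card_fin]
        have hconst : ENNReal.ofReal (n / Gamma α) = ENNReal.ofReal (1 / Gamma α) * n := by
          rw [← ENNReal.ofReal_natCast,
            ← ENNReal.ofReal_mul (by have := Gamma_pos_of_pos hα0; positivity)]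
          congr 1
          ring
        rw [hconst, mul_assoc, ← lintegral_const_mul' _ _ (ENNReal.natCast_ne_top n)]
        congr 1
        exact lintegral_congr fun t => by ring

theorem stmt4 {Ω : Type*} [MeasureSpace Ω] (μ : Measure Ω) [IsProbabilityMeasure μ]
    (n : ℕ) (hn : 0 < n)
    (Y : Fin n → Ω → ℝ)
    (hmeas : ∀ i, Measurable (Y i))
    (hindep : iIndepFun Y μ)
    (hident : ∀ i j, IdentDistrib (Y i) (Y j) μ μ)
    (hpos : ∀ i, ∀ᵐ ω ∂μ, 0 < Y i ω)
    (α : ℝ) (hα : 1 < α) (i₀ : Fin n)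
    (φα φ0 : ℝ → ℝ≥0∞)
    (hφα : ∀ t : ℝ, φα t = ∫⁻ ω, ENNReal.ofReal (Y i₀ ω ^ α * Real.exp (-t * Y i₀ ω)) ∂μ)
    (hφ0 : ∀ t : ℝ, φ0 t = ∫⁻ ω, ENNReal.ofReal (Real.exp (-t * Y i₀ ω)) ∂μ) :
    ∫⁻ ω, ENNReal.ofReal ((∑ i, Y i ω ^ α) / (∑ i, Y i ω) ^ α) ∂μ =
      ENNReal.ofReal (n / Real.Gamma α) *
        ∫⁻ t in Set.Ioi (0 : ℝ),
          ENNReal.ofReal (t ^ (α - 1)) * φα t * (φ0 t) ^ (n - 1) :=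
  stmt4_general μ n Y hmeas hindep hident hpos α hα i₀ φα φ0 hφα hφ0
end
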